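/- arXiv:2304.07855 — 2 statements merged into one kernel-verified Lean document; each statement's English description precedes it below -/
import Mathlib

section
/- Equivalence of C(α) statistics for a coefficient and for the AME in the survey logit model (Lemma 4). Fix n ≥ 1, observations y_i ∈ ℝ and covariate vectors x_i ∈ ℝ^{p+1} (first coordinate 1), strictly positive weights w_i > 0, a coordinate j ∈ {2,…,p+1}, and θ* ∈ ℝ^{p+1} whose j-th coordinate equals 0. Define Λ(z) = exp(z)/(1+exp(z)), S(θ) = n^{-1}∑_i w_i x_i (y_i − Λ(x_i'θ)), Ĥ(θ) = n^{-1}∑_i w_i x_i x_i' Λ(x_i'θ)(1−Λ(x_i'θ)), Î(θ) = n^{-1}∑_i w_i² x_i x_i' Λ(x_i'θ)(1−Λ(x_i'θ)), and assume Ĥ(θ*) and Î(θ*) are invertible. Let x_i^{(1)} and x_i^{(0)} denote x_i with the j-th coordinate replaced by 1 and 0 respectively, and let J = (∑_i w_i)^{-1} ∑_i w_i [x_i^{(1)} Λ(x_i^{(1)}'θ*)(1−Λ(x_i^{(1)}'θ*)) − x_i^{(0)} Λ(x_i^{(0)}'θ*)(1−Λ(x_i^{(0)}'θ*))] be the gradient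 of the estimated AME of the j-th regressor at θ*. Then J = κ e_j with κ = (∑_i w_i)^{-1} ∑_i w_i Λ(x_i^{(1)}'θ*)(1−Λ(x_i^{(1)}'θ*)) > 0, and consequently n S(θ*)'Ĥ(θ*)^{-1} J (J'Ĥ(θ*)^{-1}Î(θ*)Ĥ(θ*)^{-1}J)^{-1} J'Ĥ(θ*)^{-1} S(θ*) = n S(θ*)'Ĥ(θ*)^{-1} e_j (e_j'Ĥ(θ*)^{-1}Î(θ*)Ĥ(θ*)^{-1}e_j)^{-1} e_j'Ĥ(θ*)^{-1} S(θ*); i.e., the C(α) statistic for testing AME_j = 0 equals the C(α) statistic for testing the coefficient θ_{(j)} = 0. -/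
open Matrix

/-- The logistic CDF `Λ(z) = exp(z)/(1 + exp(z))`. -/
noncomputable def logisticCDF (z : ℝ) : ℝ := Real.exp z / (1 + Real.exp z)

set_option maxHeartbeats 1000000 in
lemma logisticCDF_pos (z : ℝ) : 0 < logisticCDF z := by
  unfold logisticCDF
  positivity

lemma logisticCDF_lt_one (z : ℝ) : logisticCDF z < 1 := by
  unfold logisticCDF
  rw [div_lt_one (by positivity)]
  linarith

lemma dot_update (m : ℕ) (v θ : Fin m → ℝ) (j : Fin m) (a : ℝ) (h : θ j = 0) :
    Function.update v j a ⬝ᵥ θ = v ⬝ᵥ θ := by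
  unfold dotProduct
  apply Finset.sum_congr rfl
  intro k _
  rcases eq_or_ne k j with rfl | hk
  · simp [h]
  · simp [Function.update_apply, hk]

/-- Equivalence of the C(α) statistics for a coefficient and for the AME in the survey
logit model (Lemma 4).  `x1 i`, `x0 i` are `x i` with the `j`-th coordinate replaced by
`1`, `0`; `J` is the gradient of the estimated AME of the `j`-th regressor at `θ*`
(whose `j`-th coordinate is `0`).  Then `J = κ e_j` with `κ > 0` and the C(α) statistic
in direction `J` equals the C(α) statistic in direction `e_j`. -/
theorem calpha_coefficient_ame_equivalence
    (n p : ℕ) (hn : 1 ≤ n)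
    (y : Fin n → ℝ) (x : Fin n → Fin (p + 1) → ℝ) (w : Fin n → ℝ)
    (hx0 : ∀ i, x i 0 = 1) (hw : ∀ i, 0 < w i)
    (j : Fin (p + 1)) (hj : j ≠ 0)
    (θs : Fin (p + 1) → ℝ) (hθj : θs j = 0)
    (S : Fin (p + 1) → ℝ)
    (hS : S = (n : ℝ)⁻¹ • ∑ i, (w i * (y i - logisticCDF (x i ⬝ᵥ θs))) • x i)
    (H Info : Matrix (Fin (p + 1)) (Fin (p + 1)) ℝ)
    (hH : H = (n : ℝ)⁻¹ •
      ∑ i, (w i * (logisticCDF (x i ⬝ᵥ θs) * (1 - logisticCDF (x i ⬝ᵥ θs)))) •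
        vecMulVec (x i) (x i))
    (hI : Info = (n : ℝ)⁻¹ •
      ∑ i, ((w i) ^ 2 * (logisticCDF (x i ⬝ᵥ θs) * (1 - logisticCDF (x i ⬝ᵥ θs)))) •
        vecMulVec (x i) (x i))
    (hHinv : IsUnit H.det) (hIinv : IsUnit Info.det)
    (x1 x0 : Fin n → Fin (p + 1) → ℝ)
    (hx1 : ∀ i, x1 i = Function.update (x i) j 1)
    (hx0' : ∀ i, x0 i = Function.update (x i) j 0)
    (J : Fin (p + 1) → ℝ)
    (hJ : J = (∑ i, w i)⁻¹ •
      ∑ i, w i • ((logisticCDF (x1 i ⬝ᵥ θs) * (1 - logisticCDF (x1 i ⬝ᵥ θs))) • x1 i -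
        (logisticCDF (x0 i ⬝ᵥ θs) * (1 - logisticCDF (x0 i ⬝ᵥ θs))) • x0 i))
    (κ : ℝ)
    (hκ : κ = (∑ i, w i)⁻¹ *
      ∑ i, w i * (logisticCDF (x1 i ⬝ᵥ θs) * (1 - logisticCDF (x1 i ⬝ᵥ θs))))
    (e : Fin (p + 1) → ℝ) (he : e = Pi.single j 1) :
    (J = κ • e ∧ 0 < κ) ∧
    (n : ℝ) * (S ⬝ᵥ (H⁻¹ *ᵥ J)) * (J ⬝ᵥ ((H⁻¹ * Info * H⁻¹) *ᵥ J))⁻¹ *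
        (J ⬝ᵥ (H⁻¹ *ᵥ S)) =
      (n : ℝ) * (S ⬝ᵥ (H⁻¹ *ᵥ e)) *
        (e ⬝ᵥ ((H⁻¹ * Info * H⁻¹) *ᵥ Pi.single j 1))⁻¹ *
        (e ⬝ᵥ (H⁻¹ *ᵥ S)) := by
  subst hJ hκ he
  have hd1 : ∀ i, x1 i ⬝ᵥ θs = x i ⬝ᵥ θs := fun i => by
    rw [hx1 i]; exact dot_update _ _ _ _ _ hθj
  have hd0 : ∀ i, x0 i ⬝ᵥ θs = x i ⬝ᵥ θs := fun i => by
    rw [hx0' i]; exact dot_update _ _ _ _ _ hθj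
  set c : Fin n → ℝ := fun i => logisticCDF (x i ⬝ᵥ θs) * (1 - logisticCDF (x i ⬝ᵥ θs)) with hc
  have hcpos : ∀ i, 0 < c i := fun i =>
    mul_pos (logisticCDF_pos _) (by linarith [logisticCDF_lt_one (x i ⬝ᵥ θs)])
  have hdiff : ∀ i, x1 i - x0 i = (Pi.single j 1 : Fin (p + 1) → ℝ) := by
    intro i
    funext k
    rcases eq_or_ne k j with rfl | hk
    · simp [hx1 i, hx0' i]
    · simp [hx1 i, hx0' i, Function.update_apply, Pi.single_apply, hk]
  have hwpos : 0 < ∑ i, w i :=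
    Finset.sum_pos (fun i _ => hw i) (by simp [Finset.univ_nonempty_iff, Fin.pos_iff_nonempty.mp hn])
  set κ' : ℝ := (∑ i, w i)⁻¹ * ∑ i, w i * c i with hκ'
  have hκpos : 0 < κ' := by
    apply mul_pos (inv_pos.mpr hwpos)
    exact Finset.sum_pos (fun i _ => mul_pos (hw i) (hcpos i))
      (by simp [Finset.univ_nonempty_iff, Fin.pos_iff_nonempty.mp hn])
  have hJκ : ((∑ i, w i)⁻¹ •
      ∑ i, w i • ((logisticCDF (x1 i ⬝ᵥ θs) * (1 - logisticCDF (x1 i ⬝ᵥ θs))) • x1 i -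
        (logisticCDF (x0 i ⬝ᵥ θs) * (1 - logisticCDF (x0 i ⬝ᵥ θs))) • x0 i))
      = κ' • (Pi.single j 1 : Fin (p + 1) → ℝ) := by
    have : ∀ i, w i • ((logisticCDF (x1 i ⬝ᵥ θs) * (1 - logisticCDF (x1 i ⬝ᵥ θs))) • x1 i -
        (logisticCDF (x0 i ⬝ᵥ θs) * (1 - logisticCDF (x0 i ⬝ᵥ θs))) • x0 i)
        = (w i * c i) • (Pi.single j 1 : Fin (p + 1) → ℝ) := by
      intro i
      rw [hd1 i, hd0 i, ← smul_sub, ← hdiff i, smul_smul]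
    rw [Finset.sum_congr rfl (fun i _ => this i), ← Finset.sum_smul, hκ', smul_smul]
  have hκeq : κ' = (∑ i, w i)⁻¹ *
      ∑ i, w i * (logisticCDF (x1 i ⬝ᵥ θs) * (1 - logisticCDF (x1 i ⬝ᵥ θs))) := by
    rw [hκ']
    congr 1
    exact Finset.sum_congr rfl (fun i _ => by rw [hd1 i])
  rw [← hκeq, hJκ]
  refine ⟨⟨rfl, hκpos⟩, ?_⟩
  have hκne : κ' ≠ 0 := ne_of_gt hκpos
  simp only [Matrix.mulVec_smul, dotProduct_smul, smul_dotProduct,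
    smul_eq_mul]
  generalize S ⬝ᵥ (H⁻¹ *ᵥ (Pi.single j 1 : Fin (p + 1) → ℝ)) = A
  generalize (Pi.single j 1 : Fin (p + 1) → ℝ) ⬝ᵥ ((H⁻¹ * Info * H⁻¹) *ᵥ (Pi.single j 1 : Fin (p + 1) → ℝ)) = B
  generalize (Pi.single j 1 : Fin (p + 1) → ℝ) ⬝ᵥ (H⁻¹ *ᵥ S) = C
  rcases eq_or_ne B 0 with hB | hB
  · simp [hB]
  · field_simp
end

section
/- Polyhedral lemma, deterministic part (Lemma 1(a)). Let A be an m×k real matrix, b ∈ ℝ^m, Σ a k×k real matrix and η ∈ ℝ^k with η'Ση ≠ 0. Define c = Ση (η'Ση)^{-1} and, for z ∈ ℝ^k, r = r(z) = (I_k − cη')z. Define 𝒱⁻(r) = max over indices j with (Ac)_j < 0 of (b_j − (Ar)_j)/(Ac)_j (taken as −∞ if there is no such j), 𝒱⁺(r) = min over j with (Ac)_j > 0 of (b_j − (Ar)_j)/(Ac)_j (taken as +∞ if there is no such j), and 𝒱⁰(r) = min over j with (Ac)_j = 0 of b_j − (Ar)_j (taken as +∞ if there is no such j). Then for every z ∈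 ℝ^k, the componentwise inequality Az ≤ b holds if and only if 𝒱⁻(r(z)) ≤ η'z ≤ 𝒱⁺(r(z)) and 𝒱⁰(r(z)) ≥ 0. -/
/-!
Since `A z = (η ⬝ᵥ z) • A c + A (r z)`, each row of `A z ≤ b` is an affine inequality in the
single scalar `η ⬝ᵥ z`; according to the sign of `(A c)_j` it is a lower bound, an upper bound,
or a condition on `r z` alone.
-/

open Matrix

theorem forall_mul_add_le_iff {ι : Type*} (a ρ β : ι → ℝ) (t : ℝ) :
    (∀ j, t * a j + ρ j ≤ β j) ↔
      (∀ j, a j < 0 → (β j - ρ j) / a j ≤ t) ∧ (∀ j, 0 < a j → t ≤ (β j - ρ j) / a j) ∧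
        (∀ j, a j = 0 → 0 ≤ β j - ρ j) := by
  constructor
  · intro h
    refine ⟨fun j hj => ?_, fun j hj => ?_, fun j hj => ?_⟩
    · rw [div_le_iff_of_neg hj]; linarith [h j]
    · rw [le_div_iff₀ hj]; linarith [h j]
    · have := h j; rw [hj, mul_zero, zero_add] at this; linarith
  · rintro ⟨hneg, hpos, hzero⟩ j
    rcases lt_trichotomy (a j) 0 with hj | hj | hj
    · have := (div_le_iff_of_neg hj).1 (hneg j hj); linarith
    · rw [hj, mul_zero, zero_add]; linarith [hzero j hj]
    · have := (le_div_iff₀ hj).1 (hpos j hj); linarith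

theorem polyhedral_lemma_deterministic_general
    (m k : ℕ) (A : Matrix (Fin m) (Fin k) ℝ) (b : Fin m → ℝ)
    (η : Fin k → ℝ)
    (c : Fin k → ℝ)
    (r : (Fin k → ℝ) → (Fin k → ℝ)) (hr : ∀ z, r z = z - (η ⬝ᵥ z) • c)
    (Vminus Vplus Vzero : (Fin k → ℝ) → EReal)
    (hVm : ∀ z, Vminus z =
      sSup ((fun j => (((b j - (A *ᵥ (r z)) j) / (A *ᵥ c) j : ℝ) : EReal)) ''
        {j | (A *ᵥ c) j < 0}))
    (hVp : ∀ z, Vplus z =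
      sInf ((fun j => (((b j - (A *ᵥ (r z)) j) / (A *ᵥ c) j : ℝ) : EReal)) ''
        {j | 0 < (A *ᵥ c) j}))
    (hV0 : ∀ z, Vzero z =
      sInf ((fun j => (((b j - (A *ᵥ (r z)) j) : ℝ) : EReal)) ''
        {j | (A *ᵥ c) j = 0})) :
    ∀ z : Fin k → ℝ,
      (∀ j, (A *ᵥ z) j ≤ b j) ↔
        (Vminus z ≤ ((η ⬝ᵥ z : ℝ) : EReal) ∧ ((η ⬝ᵥ z : ℝ) : EReal) ≤ Vplus z ∧
          (0 : EReal) ≤ Vzero z) := by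
  intro z
  have hdecomp : A *ᵥ z = (η ⬝ᵥ z) • (A *ᵥ c) + A *ᵥ r z := by
    rw [hr, mulVec_sub, mulVec_smul, add_sub_cancel]
  simp only [hVm, hVp, hV0, sSup_image, sInf_image, iSup₂_le_iff, le_iInf₂_iff,
    Set.mem_ofPred_eq, EReal.coe_le_coe_iff, ← EReal.coe_zero]
  simpa [hdecomp] using forall_mul_add_le_iff (A *ᵥ c) (A *ᵥ r z) b (η ⬝ᵥ z)

/-- Polyhedral lemma, deterministic part (Lee, Sun, Sun and Taylor (2016), Lemma 5.1).
`𝒱⁻`, `𝒱⁺`, `𝒱⁰` are extended reals: the suprema/infima over empty index sets are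
`⊥ = -∞` and `⊤ = +∞` respectively. -/
theorem polyhedral_lemma_deterministic
    (m k : ℕ) (A : Matrix (Fin m) (Fin k) ℝ) (b : Fin m → ℝ)
    (Sig : Matrix (Fin k) (Fin k) ℝ) (η : Fin k → ℝ)
    (hη : η ⬝ᵥ (Sig *ᵥ η) ≠ 0)
    (c : Fin k → ℝ) (hc : c = (η ⬝ᵥ (Sig *ᵥ η))⁻¹ • (Sig *ᵥ η))
    (r : (Fin k → ℝ) → (Fin k → ℝ)) (hr : ∀ z, r z = z - (η ⬝ᵥ z) • c)
    (Vminus Vplus Vzero : (Fin k → ℝ) → EReal)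
    (hVm : ∀ z, Vminus z =
      sSup ((fun j => (((b j - (A *ᵥ (r z)) j) / (A *ᵥ c) j : ℝ) : EReal)) ''
        {j | (A *ᵥ c) j < 0}))
    (hVp : ∀ z, Vplus z =
      sInf ((fun j => (((b j - (A *ᵥ (r z)) j) / (A *ᵥ c) j : ℝ) : EReal)) ''
        {j | 0 < (A *ᵥ c) j}))
    (hV0 : ∀ z, Vzero z =
      sInf ((fun j => (((b j - (A *ᵥ (r z)) j) : ℝ) : EReal)) ''
        {j | (A *ᵥ c) j = 0})) :
    ∀ z : Fin k → ℝ,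
      (∀ j, (A *ᵥ z) j ≤ b j) ↔
        (Vminus z ≤ ((η ⬝ᵥ z : ℝ) : EReal) ∧ ((η ⬝ᵥ z : ℝ) : EReal) ≤ Vplus z ∧
          (0 : EReal) ≤ Vzero z) :=
  polyhedral_lemma_deterministic_general m k A b η c r hr Vminus Vplus Vzero hVm hVp hV0
end
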